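/- arXiv:nlin/0005054 — 12 statements merged into one kernel-verified Lean document; each statement's English description precedes it below -/
import Mathlib

section
/- Let x, p ∈ ℝ^N, Ω = diag(ω_1,…,ω_N) with distinct ω_k, and F_k = x_k² + Σ_{j≠k} (p_k x_j − x_k p_j)²/(ω_k − ω_j). Then (1/2) Σ_{k=1}^N ω_k F_k = (1/2)(⟨p,p⟩⟨x,x⟩ − ⟨p,x⟩²) + (1/2)⟨Ωx,x⟩. -/
/-!
Since `(p_k x_j - x_k p_j)²` is symmetric in `(k, j)` and
`ω_k / (ω_k - ω_j) + ω_j / (ω_j - ω_k) = 1`, symmetrizing the double sum removes the `ω`'s: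
`∑_k ω_k ∑_{j ≠ k} (p_k x_j - x_k p_j)² / (ω_k - ω_j) = ½ ∑_{k,j} (p_k x_j - x_k p_j)²`,
and the latter is `|p|²|x|² - ⟨p, x⟩²` by Lagrange's identity.
-/

open Finset

namespace Finset

variable {ι R : Type*}

theorem sum_sum_sub_mul_sq_eq [CommRing R] (s : Finset ι) (a b : ι → R) :
    ∑ i ∈ s, ∑ j ∈ s, (a i * b j - b i * a j) ^ 2
      = 2 * ((∑ i ∈ s, a i * a i) * (∑ i ∈ s, b i * b i) - (∑ i ∈ s, a i * b i) ^ 2) := by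
  calc ∑ i ∈ s, ∑ j ∈ s, (a i * b j - b i * a j) ^ 2
      = ∑ i ∈ s, ∑ j ∈ s, (a i * a i * (b j * b j) + b i * b i * (a j * a j)
          - 2 * (a i * b i * (a j * b j))) := by
        refine sum_congr rfl fun i _ => sum_congr rfl fun j _ => ?_
        ring
    _ = _ := by
        simp only [sum_add_distrib, sum_sub_distrib, ← mul_sum, ← sum_mul]
        ring

variable [DecidableEq ι]

theorem sum_sum_erase_comm [AddCommGroup R] (s : Finset ι) (f : ι → ι → R) :
    ∑ k ∈ s, ∑ j ∈ s.erase k, f j k = ∑ k ∈ s, ∑ j ∈ s.erase k, f k j := by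
  have erase_diag (g : ι → ι → R) :
      ∑ k ∈ s, ∑ j ∈ s.erase k, g k j = ∑ k ∈ s, ∑ j ∈ s, g k j - ∑ k ∈ s, g k k := by
    rw [← sum_sub_distrib]
    exact sum_congr rfl fun k hk => sum_erase_eq_sub hk
  rw [erase_diag (fun k j => f j k), erase_diag, sum_comm]

theorem two_mul_sum_mul_sum_erase_div_sub [Field R] (s : Finset ι) {w : ι → R}
    (hw : Set.InjOn w s) {c : ι → ι → R} (hc : ∀ k j, c k j = c j k) :
    2 * ∑ k ∈ s, w k * ∑ j ∈ s.erase k, c k j / (w k - w j)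
      = ∑ k ∈ s, ∑ j ∈ s.erase k, c k j := by
  have pair (k j : ι) (hk : k ∈ s) (hj : j ∈ s.erase k) :
      w k * (c k j / (w k - w j)) + w j * (c j k / (w j - w k)) = c k j := by
    have hne : w k - w j ≠ 0 :=
      sub_ne_zero.mpr fun h => (ne_of_mem_erase hj) (hw (mem_of_mem_erase hj) hk h.symm)
    rw [hc j k, ← neg_sub (w k), div_neg]
    field_simp
    ring
  rw [two_mul]
  simp only [mul_sum]
  nth_rw 2 [← sum_sum_erase_comm]
  rw [← sum_add_distrib]
  refine sum_congr rfl fun k hk => ?_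
  rw [← sum_add_distrib]
  exact sum_congr rfl fun j hj => pair k j hk hj

end Finset

theorem neumann_hamiltonian_as_combination (N : ℕ) (x p ω : Fin N → ℝ)
    (hω : ∀ j k : Fin N, j ≠ k → ω j ≠ ω k) :
    (1/2) * ∑ k, ω k * (x k ^ 2 + ∑ j ∈ Finset.univ.erase k,
        (p k * x j - x k * p j) ^ 2 / (ω k - ω j))
      = (1/2) * ((∑ i, p i * p i) * (∑ i, x i * x i) - (∑ i, p i * x i) ^ 2)
        + (1/2) * ∑ i, ω i * x i * x i := by
  have hinj : Set.InjOn ω (univ : Finset (Fin N)) := fun j _ k _ h => by_contra (hω j k · h)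
  have hoff : 2 * ∑ k, ω k * ∑ j ∈ univ.erase k, (p k * x j - x k * p j) ^ 2 / (ω k - ω j)
      = 2 * ((∑ i, p i * p i) * (∑ i, x i * x i) - (∑ i, p i * x i) ^ 2) := by
    rw [two_mul_sum_mul_sum_erase_div_sub univ hinj (fun k j => by ring),
      ← sum_sum_sub_mul_sq_eq]
    exact sum_congr rfl fun k _ => sum_erase _ (by ring)
  have hdiag : ∑ k, ω k * x k ^ 2 = ∑ i, ω i * x i * x i :=
    sum_congr rfl fun i _ => by ring
  simp only [mul_add, sum_add_distrib]
  linear_combination hoff / 4 + hdiag / 2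
end

section
/- Let x : ℝ → ℝ^N be a C² solution of ẍ_k = −ω_k x_k − α x_k with α = ⟨ẋ,ẋ⟩ − ⟨Ωx,x⟩, satisfying ⟨x,x⟩ = 1 and ⟨ẋ,x⟩ = 0. Then for each k, the function F_k = x_k² + Σ_{j≠k} (ẋ_k x_j − x_k ẋ_j)²/(ω_k − ω_j) is constant in time (assuming ω_j pairwise distinct). -/
open Finset

/-!
Writing `L_kj = ẋ_k x_j - x_k ẋ_j`, the multiplier `α` cancels from `L̇_kj = ẍ_k x_j - x_k ẍ_j`,
leaving `L̇_kj = (ω_j - ω_k) x_k x_j`. Hence `d/dt F_k = 2 x_k ẋ_k - 2 x_k ∑_j L_kj x_j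
= 2 x_k (ẋ_k (1 - ⟨x,x⟩) + x_k ⟨ẋ,x⟩)`, which vanishes on the tangent bundle of the sphere.
-/

section Uhlenbeck

variable {ι : Type*}

def angularMomentum (q p : ι → ℝ) (k j : ι) : ℝ := p k * q j - q k * p j

lemma angularMomentum_self (q p : ι → ℝ) (k : ι) : angularMomentum q p k k = 0 := by
  rw [angularMomentum]; ring

lemma hasDerivAt_angularMomentum {q p : ℝ → ι → ℝ} {ω : ι → ℝ} {a t : ℝ}
    (hq : HasDerivAt q (p t) t) (hp : HasDerivAt p (fun i ↦ -ω i * q t i - a * q t i) t)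
    (k j : ι) :
    HasDerivAt (fun s ↦ angularMomentum (q s) (p s) k j) ((ω j - ω k) * (q t k * q t j)) t := by
  have hqi := hasDerivAt_pi.mp hq
  have hpi := hasDerivAt_pi.mp hp
  exact (((hpi k).mul (hqi j)).sub ((hqi k).mul (hpi j))).congr_deriv (by ring)

variable [Fintype ι]

lemma sum_angularMomentum_mul (q p : ι → ℝ) (k : ι) :
    ∑ j, angularMomentum q p k j * q j = p k * (q ⬝ᵥ q) - q k * (p ⬝ᵥ q) := by
  simp only [angularMomentum, dotProduct, sub_mul, sum_sub_distrib, mul_sum, mul_assoc]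

variable [DecidableEq ι]

noncomputable def uhlenbeckIntegral (ω q p : ι → ℝ) (k : ι) : ℝ :=
  q k ^ 2 + ∑ j ∈ univ.erase k, angularMomentum q p k j ^ 2 / (ω k - ω j)

lemma hasDerivAt_uhlenbeckIntegral {q p : ℝ → ι → ℝ} {ω : ι → ℝ} {a t : ℝ} {k : ι}
    (hω : ∀ j, j ≠ k → ω j ≠ ω k)
    (hq : HasDerivAt q (p t) t) (hp : HasDerivAt p (fun i ↦ -ω i * q t i - a * q t i) t) :
    HasDerivAt (fun s ↦ uhlenbeckIntegral ω (q s) (p s) k)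
      (2 * q t k * (p t k * (1 - q t ⬝ᵥ q t) + q t k * (p t ⬝ᵥ q t))) t := by
  have hterm : ∀ j ∈ univ.erase k,
      HasDerivAt (fun s ↦ angularMomentum (q s) (p s) k j ^ 2 / (ω k - ω j))
        (-2 * q t k * (angularMomentum (q t) (p t) k j * q t j)) t := by
    intro j hj
    have hne : ω k - ω j ≠ 0 := sub_ne_zero.2 (hω j (ne_of_mem_erase hj)).symm
    refine (((hasDerivAt_angularMomentum hq hp k j).pow 2).div_const (ω k - ω j)).congr_deriv ?_
    field_simp
    ring
  have hsum : ∑ j ∈ univ.erase k, -2 * q t k * (angularMomentum (q t) (p t) k j * q t j)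
      = -2 * q t k * (p t k * (q t ⬝ᵥ q t) - q t k * (p t ⬝ᵥ q t)) := by
    rw [← mul_sum, sum_erase _ (by rw [angularMomentum_self, zero_mul]), sum_angularMomentum_mul]
  refine (((hasDerivAt_pi.mp hq k).pow 2).add (HasDerivAt.fun_sum hterm)).congr_deriv ?_
  rw [hsum]
  ring

end Uhlenbeck

theorem neumann_uhlenbeck_integrals_constant (N : ℕ) (ω : Fin N → ℝ)
    (hω : ∀ j k : Fin N, j ≠ k → ω j ≠ ω k)
    (x : ℝ → (Fin N → ℝ))
    (hx : ContDiff ℝ 2 x)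
    (heq : ∀ t, ∀ k, deriv (deriv x) t k =
      -ω k * x t k
        - ((∑ i, deriv x t i * deriv x t i) - ∑ i, ω i * x t i * x t i) * x t k)
    (hsphere : ∀ t, ∑ i, x t i * x t i = 1)
    (htangent : ∀ t, ∑ i, deriv x t i * x t i = 0) :
    ∀ k : Fin N, ∀ t s : ℝ,
      (x t k ^ 2 + ∑ j ∈ Finset.univ.erase k,
          (deriv x t k * x t j - x t k * deriv x t j) ^ 2 / (ω k - ω j))
      = (x s k ^ 2 + ∑ j ∈ Finset.univ.erase k,
          (deriv x s k * x s j - x s k * deriv x s j) ^ 2 / (ω k - ω j)) := by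
  intro k t s
  have hF : ∀ t, HasDerivAt (fun s ↦ uhlenbeckIntegral ω (x s) (deriv x s) k) 0 t := by
    intro t
    have hv : HasDerivAt x (deriv x t) t := (hx.differentiable (by norm_num) t).hasDerivAt
    have ha := (hx.differentiable_deriv_two t).hasDerivAt
    rw [funext (heq t)] at ha
    simpa [dotProduct, hsphere t, htangent t] using
      hasDerivAt_uhlenbeckIntegral (fun j hj ↦ hω j k hj) hv ha
  exact is_const_of_deriv_eq_zero (fun t ↦ (hF t).differentiableAt) (fun t ↦ (hF t).deriv) t s
end

section
/- Let A = diag(α_1,…,α_N) and suppose x, x̃, x̰ ∈ ℝ^N with ⟨x̃,x⟩ ≠ −1, ⟨x,x̰⟩ ≠ −1, ⟨Ax,x⟩ ≠ 0 satisfy (x̃_k + x_k)/(1 + ⟨x̃,x⟩) + (x_k + x̰_k)/(1 + ⟨x,x̰⟩) = 2α_k x_k/⟨Ax,x⟩ for all k, and additionally ⟨x̃,x̃⟩ = ⟨x,x⟩ = ⟨x̰,x̰⟩ = 1. Then ⟨Ax̃,x⟩/(1 + ⟨x̃,x⟩) = ⟨Ax,x̰⟩/(1 + ⟨x,x̰⟩).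 -/
open Finset

theorem adler_first_integral (N : ℕ) (α : Fin N → ℝ) (x xt xu : Fin N → ℝ)
    (h1 : (∑ i, xt i * x i) ≠ -1) (h2 : (∑ i, x i * xu i) ≠ -1)
    (h3 : (∑ i, α i * x i * x i) ≠ 0)
    (heq : ∀ k, (xt k + x k) / (1 + ∑ i, xt i * x i)
        + (x k + xu k) / (1 + ∑ i, x i * xu i)
        = 2 * α k * x k / (∑ i, α i * x i * x i))
    (hs1 : ∑ i, xt i * xt i = 1) (hs2 : ∑ i, x i * x i = 1)
    (hs3 : ∑ i, xu i * xu i = 1) :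
    (∑ i, α i * xt i * x i) / (1 + ∑ i, xt i * x i)
      = (∑ i, α i * x i * xu i) / (1 + ∑ i, x i * xu i) := by
  set a := ∑ i, xt i * x i with ha
  set b := ∑ i, x i * xu i with hb
  set c := ∑ i, α i * x i * x i with hc
  set S1 := ∑ i, α i * xt i * x i with hS1
  set S2 := ∑ i, α i * x i * xu i with hS2
  set d := ∑ i, xt i * xu i with hd
  have h1' : 1 + a ≠ 0 := fun h => h1 (by linarith)
  have h2' : 1 + b ≠ 0 := fun h => h2 (by linarith)
  have heq' : ∀ k, (xt k + x k) * ((1 + b) * c) + (x k + xu k) * ((1 + a) * c)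
      = 2 * α k * x k * ((1 + a) * (1 + b)) := by
    intro k
    have h := heq k
    field_simp at h
    linear_combination h
  -- sum against xt
  have E1 : (1 + a) * ((1 + b) * c) + (a + d) * ((1 + a) * c)
      = S1 * (2 * (1 + a) * (1 + b)) := by
    have e : ∑ k, ((xt k + x k) * ((1 + b) * c) + (x k + xu k) * ((1 + a) * c)) * xt k
        = ∑ k, 2 * α k * x k * ((1 + a) * (1 + b)) * xt k :=
      Finset.sum_congr rfl fun k _ => by rw [heq' k]
    have l : ∑ k, ((xt k + x k) * ((1 + b) * c) + (x k + xu k) * ((1 + a) * c)) * xt k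
        = (∑ k, xt k * xt k) * ((1 + b) * c) + (∑ k, xt k * x k) * ((1 + b) * c)
          + (∑ k, xt k * x k) * ((1 + a) * c) + (∑ k, xt k * xu k) * ((1 + a) * c) := by
      rw [Finset.sum_mul, Finset.sum_mul, Finset.sum_mul, Finset.sum_mul,
        ← Finset.sum_add_distrib, ← Finset.sum_add_distrib, ← Finset.sum_add_distrib]
      exact Finset.sum_congr rfl fun k _ => by ring
    have r : ∑ k, 2 * α k * x k * ((1 + a) * (1 + b)) * xt k
        = (∑ k, α k * xt k * x k) * (2 * (1 + a) * (1 + b)) := by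
      rw [Finset.sum_mul]
      exact Finset.sum_congr rfl fun k _ => by ring
    rw [l, r, hs1] at e
    linear_combination e
  -- sum against xu
  have E2 : (d + b) * ((1 + b) * c) + (b + 1) * ((1 + a) * c)
      = S2 * (2 * (1 + a) * (1 + b)) := by
    have e : ∑ k, ((xt k + x k) * ((1 + b) * c) + (x k + xu k) * ((1 + a) * c)) * xu k
        = ∑ k, 2 * α k * x k * ((1 + a) * (1 + b)) * xu k :=
      Finset.sum_congr rfl fun k _ => by rw [heq' k]
    have l : ∑ k, ((xt k + x k) * ((1 + b) * c) + (x k + xu k) * ((1 + a) * c)) * xu k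
        = (∑ k, xt k * xu k) * ((1 + b) * c) + (∑ k, x k * xu k) * ((1 + b) * c)
          + (∑ k, x k * xu k) * ((1 + a) * c) + (∑ k, xu k * xu k) * ((1 + a) * c) := by
      rw [Finset.sum_mul, Finset.sum_mul, Finset.sum_mul, Finset.sum_mul,
        ← Finset.sum_add_distrib, ← Finset.sum_add_distrib, ← Finset.sum_add_distrib]
      exact Finset.sum_congr rfl fun k _ => by ring
    have r : ∑ k, 2 * α k * x k * ((1 + a) * (1 + b)) * xu k
        = (∑ k, α k * x k * xu k) * (2 * (1 + a) * (1 + b)) := by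
      rw [Finset.sum_mul]
      exact Finset.sum_congr rfl fun k _ => by ring
    rw [l, r, hs3] at e
    linear_combination e
  rw [div_eq_div_iff h1' h2']
  have hne : (2 * (1 + a) * (1 + b)) ≠ 0 :=
    mul_ne_zero (mul_ne_zero two_ne_zero h1') h2'
  have key : S1 * (1 + b) * (2 * (1 + a) * (1 + b))
      = S2 * (1 + a) * (2 * (1 + a) * (1 + b)) := by
    linear_combination (1 + a) * E2 - (1 + b) * E1
  exact mul_right_cancel₀ hne key
end

section
/- Let A = diag(α_1,…,α_N) with all α_k ≠ 0, and suppose x, x̃, x̰ ∈ ℝ^N with ⟨x̃,x⟩ ≠ −1, ⟨x,x̰⟩ ≠ −1, ⟨Ax,x⟩ ≠ 0 satisfy (x̃_k + x_k)/(1 + ⟨x̃,x⟩) + (x_k + x̰_k)/(1 + ⟨x,x̰⟩) = 2α_k x_k/⟨Ax,x⟩ for all k, with ⟨x̃,x̃⟩ = ⟨x,x⟩ = ⟨x̰,x̰⟩ = 1. Then ⟨A⁻¹(x̃+x), x̃+x⟩/(1+⟨x̃,x⟩)² = ⟨A⁻¹(x+x̰), x+x̰⟩/(1+⟨x,x̰⟩)².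 -/
open Finset

theorem adler_second_integral (N : ℕ) (α : Fin N → ℝ) (hα : ∀ k, α k ≠ 0)
    (x xt xu : Fin N → ℝ)
    (h1 : (∑ i, xt i * x i) ≠ -1) (h2 : (∑ i, x i * xu i) ≠ -1)
    (h3 : (∑ i, α i * x i * x i) ≠ 0)
    (heq : ∀ k, (xt k + x k) / (1 + ∑ i, xt i * x i)
        + (x k + xu k) / (1 + ∑ i, x i * xu i)
        = 2 * α k * x k / (∑ i, α i * x i * x i))
    (hs1 : ∑ i, xt i * xt i = 1) (hs2 : ∑ i, x i * x i = 1)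
    (hs3 : ∑ i, xu i * xu i = 1) :
    (∑ i, (α i)⁻¹ * (xt i + x i) * (xt i + x i)) / (1 + ∑ i, xt i * x i) ^ 2
      = (∑ i, (α i)⁻¹ * (x i + xu i) * (x i + xu i)) / (1 + ∑ i, x i * xu i) ^ 2 := by
  set a : ℝ := 1 + ∑ i, xt i * x i with ha
  set b : ℝ := 1 + ∑ i, x i * xu i with hb
  set c : ℝ := ∑ i, α i * x i * x i with hc
  have ha0 : a ≠ 0 := fun h => h1 (by rw [ha] at h; linarith)
  have hb0 : b ≠ 0 := fun h => h2 (by rw [hb] at h; linarith)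
  -- ∑ u_i x_i = 1
  have hux : ∑ i, (xt i + x i) / a * x i = 1 := by
    have h' : ∑ i, (xt i + x i) / a * x i = (∑ i, (xt i + x i) * x i) / a := by
      rw [Finset.sum_div]
      exact Finset.sum_congr rfl fun i _ => by ring
    have h'' : ∑ i, (xt i + x i) * x i = a := by
      have : ∑ i, (xt i + x i) * x i = (∑ i, xt i * x i) + ∑ i, x i * x i := by
        rw [← Finset.sum_add_distrib]
        exact Finset.sum_congr rfl fun i _ => by ring
      rw [this, hs2, ha]; ring
    rw [h', h'', div_self ha0]
  have hvx : ∑ i, (x i + xu i) / b * x i = 1 := by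
    have h' : ∑ i, (x i + xu i) / b * x i = (∑ i, (x i + xu i) * x i) / b := by
      rw [Finset.sum_div]
      exact Finset.sum_congr rfl fun i _ => by ring
    have h'' : ∑ i, (x i + xu i) * x i = b := by
      have : ∑ i, (x i + xu i) * x i = (∑ i, x i * x i) + ∑ i, x i * xu i := by
        rw [← Finset.sum_add_distrib]
        exact Finset.sum_congr rfl fun i _ => by ring
      rw [this, hs2, hb]
    rw [h', h'', div_self hb0]
  have key : ∑ i, (α i)⁻¹ * ((xt i + x i) / a) * ((xt i + x i) / a)
      = ∑ i, (α i)⁻¹ * ((x i + xu i) / b) * ((x i + xu i) / b) := by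
    have hdiff : ∀ i ∈ Finset.univ,
        (α i)⁻¹ * ((xt i + x i) / a) * ((xt i + x i) / a)
          - (α i)⁻¹ * ((x i + xu i) / b) * ((x i + xu i) / b)
        = (2 / c) * (((xt i + x i) / a) * x i - ((x i + xu i) / b) * x i) := by
      intro i _
      have h := heq i
      set u : ℝ := (xt i + x i) / a
      set v : ℝ := (x i + xu i) / b
      have e1 : (α i)⁻¹ * u * u - (α i)⁻¹ * v * v = (α i)⁻¹ * (u - v) * (u + v) := by
        ring
      rw [e1, h]
      rw [show (α i)⁻¹ * (u - v) * (2 * α i * x i / c)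
          = ((α i)⁻¹ * α i) * (2 / c) * ((u - v) * x i) by ring,
        inv_mul_cancel₀ (hα i)]
      ring
    have := Finset.sum_congr rfl hdiff
    rw [Finset.sum_sub_distrib] at this
    rw [← Finset.mul_sum, Finset.sum_sub_distrib, hux, hvx] at this
    simp at this
    linarith
  have conv1 : ∑ i, (α i)⁻¹ * ((xt i + x i) / a) * ((xt i + x i) / a)
      = (∑ i, (α i)⁻¹ * (xt i + x i) * (xt i + x i)) / a ^ 2 := by
    rw [Finset.sum_div]
    exact Finset.sum_congr rfl fun i _ => by field_simp
  have conv2 : ∑ i, (α i)⁻¹ * ((x i + xu i) / b) * ((x i + xu i) / b)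
      = (∑ i, (α i)⁻¹ * (x i + xu i) * (x i + xu i)) / b ^ 2 := by
    rw [Finset.sum_div]
    exact Finset.sum_congr rfl fun i _ => by field_simp
  rw [← conv1, ← conv2]
  exact key
end

section
/- Let x, x̃, x̰ ∈ ℝ^N with ⟨x̃,x̃⟩ = ⟨x,x⟩ = ⟨x̰,x̰⟩ = 1, ⟨x̃,x⟩ ≠ −1, ⟨x,x̰⟩ ≠ −1, ⟨Ax,x⟩ ≠ 0, satisfying Adler's equations (x̃+x)/(1+⟨x̃,x⟩) = 2Ax/⟨Ax,x⟩ − (x+x̰)/(1+⟨x,x̰⟩) where A = diag(α_1,…,α_N). Then 2/(1+⟨x̃,x⟩) = ‖2Ax/⟨Ax,x⟩ − (x+x̰)/(1+⟨x,x̰⟩)‖². -/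
open Finset

theorem adler_explicit_norm_formula (N : ℕ) (α : Fin N → ℝ) (x xt xu : Fin N → ℝ)
    (hs1 : ∑ i, xt i * xt i = 1) (hs2 : ∑ i, x i * x i = 1)
    (hs3 : ∑ i, xu i * xu i = 1)
    (h1 : (∑ i, xt i * x i) ≠ -1) (h2 : (∑ i, x i * xu i) ≠ -1)
    (h3 : (∑ i, α i * x i * x i) ≠ 0)
    (heq : ∀ k, (xt k + x k) / (1 + ∑ i, xt i * x i)
        = 2 * α k * x k / (∑ i, α i * x i * x i)
          - (x k + xu k) / (1 + ∑ i, x i * xu i)) :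
    2 / (1 + ∑ i, xt i * x i)
      = ∑ k, (2 * α k * x k / (∑ i, α i * x i * x i)
          - (x k + xu k) / (1 + ∑ i, x i * xu i)) ^ 2 := by
  set c := ∑ i, xt i * x i with hc
  have hc0 : 1 + c ≠ 0 := by
    intro h; apply h1; linarith
  have hsum : ∑ k, ((xt k + x k) / (1 + c)) ^ 2 = 2 / (1 + c) := by
    have : ∑ k, ((xt k + x k) / (1 + c)) ^ 2
        = (∑ k, (xt k * xt k + 2 * (xt k * x k) + x k * x k)) / (1 + c) ^ 2 := by
      rw [Finset.sum_div]
      congr 1; ext k; field_simp; ring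
    rw [this, Finset.sum_add_distrib, Finset.sum_add_distrib, hs1, hs2,
      ← Finset.mul_sum, ← hc]
    field_simp; ring
  rw [← hsum]
  exact Finset.sum_congr rfl fun k _ => by rw [← heq k]
end

section
/- Let x, x̃ ∈ ℝ^N with ⟨x,x⟩ = ⟨x̃,x̃⟩ = 1, ⟨x̃,x⟩ ≠ −1, ⟨Ax,x⟩ ≠ 0, and p defined by h p_k = 2(x̃_k + x_k)/(1+⟨x̃,x⟩) − 4α_k x_k/⟨Ax,x⟩ + 2x_k where A = diag(α_1,…,α_N). Then 2⟨Ax̃,x⟩/(1+⟨x̃,x⟩) = ⟨Ax,x⟩ − h⟨Ax,p⟩ − (h²/4)⟨p,p⟩⟨Ax,x⟩. -/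
/-!
Everything lives in a real inner product space with `y = A x`: the hypothesis says that `h • p`
is an explicit combination of `x̃`, `x` and `y`, so `⟪y, h • p⟫` and `‖h • p‖²` expand into the
four scalars `⟪x, x̃⟫`, `⟪x, y⟫`, `⟪x̃, y⟫`, `⟪y, y⟫`. In the right-hand side the `⟪y, y⟫` terms
cancel, and `⟪x, x⟫ = ⟪x̃, x̃⟫ = 1` leaves exactly `2 ⟪x̃, y⟫ / (1 + ⟪x, x̃⟫)`.
-/

open Finset RealInnerProductSpace

section AdlerMomentum

variable {E : Type*} [NormedAddCommGroup E] [InnerProductSpace ℝ E]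

/-- The vector `h p` of Adler's discrete Neumann system, with `y` standing for `A x`. -/
noncomputable def adlerMomentum (x xt y : E) : E :=
  (2 / (1 + ⟪x, xt⟫)) • (xt + x) - (4 / ⟪x, y⟫) • y + (2 : ℝ) • x

variable {x xt : E} (y : E)

theorem inner_adlerMomentum_left :
    ⟪y, adlerMomentum x xt y⟫ =
      2 / (1 + ⟪x, xt⟫) * (⟪xt, y⟫ + ⟪x, y⟫) - 4 / ⟪x, y⟫ * ⟪y, y⟫ + 2 * ⟪x, y⟫ := by
  simp only [adlerMomentum, inner_add_right, inner_sub_right, inner_smul_right,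
    real_inner_comm xt y, real_inner_comm x y]

theorem inner_adlerMomentum_self (hx : ⟪x, x⟫ = 1) (hxt : ⟪xt, xt⟫ = 1)
    (hs : 1 + ⟪x, xt⟫ ≠ 0) (ha : ⟪x, y⟫ ≠ 0) :
    ⟪adlerMomentum x xt y, adlerMomentum x xt y⟫ =
      8 / (1 + ⟪x, xt⟫) + 12
        - 8 / ⟪x, y⟫ * (2 / (1 + ⟪x, xt⟫) * (⟪xt, y⟫ + ⟪x, y⟫) + 2 * ⟪x, y⟫)
        + 16 / ⟪x, y⟫ ^ 2 * ⟪y, y⟫ := by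
  simp only [adlerMomentum, inner_add_right, inner_sub_right, inner_smul_right, inner_add_left,
    inner_sub_left, inner_smul_left, real_inner_comm x xt, real_inner_comm xt y,
    real_inner_comm x y, hx, hxt, RCLike.conj_to_real]
  field_simp
  ring

theorem adler_integral_identity (hx : ⟪x, x⟫ = 1) (hxt : ⟪xt, xt⟫ = 1)
    (hs : 1 + ⟪x, xt⟫ ≠ 0) (ha : ⟪x, y⟫ ≠ 0) :
    2 * ⟪xt, y⟫ / (1 + ⟪x, xt⟫) = ⟪x, y⟫ - ⟪y, adlerMomentum x xt y⟫
      - ⟪adlerMomentum x xt y, adlerMomentum x xt y⟫ / 4 * ⟪x, y⟫ := by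
  rw [inner_adlerMomentum_left, inner_adlerMomentum_self y hx hxt hs ha]
  field_simp
  ring

end AdlerMomentum

theorem adler_I1_canonical_general (N : ℕ) (α : Fin N → ℝ) (h : ℝ)
    (x xt p : Fin N → ℝ)
    (hs1 : ∑ i, x i * x i = 1) (hs2 : ∑ i, xt i * xt i = 1)
    (h1 : (∑ i, xt i * x i) ≠ -1) (h2 : (∑ i, α i * x i * x i) ≠ 0)
    (hp : ∀ k, h * p k = 2 * (xt k + x k) / (1 + ∑ i, xt i * x i)
        - 4 * α k * x k / (∑ i, α i * x i * x i) + 2 * x k) :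
    2 * (∑ i, α i * xt i * x i) / (1 + ∑ i, xt i * x i)
      = (∑ i, α i * x i * x i) - h * (∑ i, α i * x i * p i)
        - (h ^ 2 / 4) * (∑ i, p i * p i) * (∑ i, α i * x i * x i) := by
  set X := WithLp.toLp 2 x
  set Xt := WithLp.toLp 2 xt
  set Y := WithLp.toLp 2 (fun i => α i * x i)
  set P := WithLp.toLp 2 p
  have hXX : ⟪X, X⟫ = ∑ i, x i * x i := rfl
  have hXtXt : ⟪Xt, Xt⟫ = ∑ i, xt i * xt i := rfl
  have hXXt : ⟪X, Xt⟫ = ∑ i, xt i * x i := rfl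
  have hXY : ⟪X, Y⟫ = ∑ i, α i * x i * x i := rfl
  have hXtY : ⟪Xt, Y⟫ = ∑ i, α i * xt i * x i :=
    show ∑ i, α i * x i * xt i = _ from sum_congr rfl fun i _ => by ring
  have hPY : ⟪P, Y⟫ = ∑ i, α i * x i * p i := rfl
  have hPP : ⟪P, P⟫ = ∑ i, p i * p i := rfl
  have hmom : h • P = adlerMomentum X Xt Y := by
    ext k
    simp only [adlerMomentum, hXXt, hXY, PiLp.smul_apply, PiLp.add_apply, PiLp.sub_apply,
      smul_eq_mul, smul_add, hp k, X, Xt, Y, P]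
    ring
  have key := adler_integral_identity Y (hXX.trans hs1) (hXtXt.trans hs2)
    (by rw [hXXt]; contrapose! h1; linarith) (hXY ▸ h2)
  rw [← hmom, real_inner_smul_left, real_inner_smul_right, real_inner_smul_right,
    real_inner_comm P Y, hXXt, hXY, hXtY, hPY, hPP] at key
  linear_combination key

theorem adler_I1_canonical (N : ℕ) (α : Fin N → ℝ) (h : ℝ) (hh : h ≠ 0)
    (x xt p : Fin N → ℝ)
    (hs1 : ∑ i, x i * x i = 1) (hs2 : ∑ i, xt i * xt i = 1)
    (h1 : (∑ i, xt i * x i) ≠ -1) (h2 : (∑ i, α i * x i * x i) ≠ 0)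
    (hp : ∀ k, h * p k = 2 * (xt k + x k) / (1 + ∑ i, xt i * x i)
        - 4 * α k * x k / (∑ i, α i * x i * x i) + 2 * x k) :
    2 * (∑ i, α i * xt i * x i) / (1 + ∑ i, xt i * x i)
      = (∑ i, α i * x i * x i) - h * (∑ i, α i * x i * p i)
        - (h ^ 2 / 4) * (∑ i, p i * p i) * (∑ i, α i * x i * x i) :=
  adler_I1_canonical_general N α h x xt p hs1 hs2 h1 h2 hp
end

section
/- Let x, x̃ ∈ ℝ^N with ⟨x,x⟩ = ⟨x̃,x̃⟩ = 1, ⟨x̃,x⟩ ≠ −1, ⟨Ax,x⟩ ≠ 0, A = diag(α_1,…,α_N) invertible, and p defined by h p_k = 2(x̃_k + x_k)/(1+⟨x̃,x⟩) − 4α_k x_k/⟨Ax,x⟩ + 2x_k. Then ⟨A⁻¹(x̃+x), x̃+x⟩/(1+⟨x̃,x⟩)² = ⟨A⁻¹x,x⟩ − h⟨A⁻¹x,p⟩ + (h²/4)⟨A⁻¹p,p⟩. -/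
open Finset

theorem adler_I2_canonical (N : ℕ) (α : Fin N → ℝ) (hα : ∀ k, α k ≠ 0)
    (h : ℝ) (hh : h ≠ 0) (x xt p : Fin N → ℝ)
    (hs1 : ∑ i, x i * x i = 1) (hs2 : ∑ i, xt i * xt i = 1)
    (h1 : (∑ i, xt i * x i) ≠ -1) (h2 : (∑ i, α i * x i * x i) ≠ 0)
    (hp : ∀ k, h * p k = 2 * (xt k + x k) / (1 + ∑ i, xt i * x i)
        - 4 * α k * x k / (∑ i, α i * x i * x i) + 2 * x k) :
    (∑ i, (α i)⁻¹ * (xt i + x i) * (xt i + x i)) / (1 + ∑ i, xt i * x i) ^ 2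
      = (∑ i, (α i)⁻¹ * x i * x i) - h * (∑ i, (α i)⁻¹ * x i * p i)
        + (h ^ 2 / 4) * (∑ i, (α i)⁻¹ * p i * p i) := by
  set S : ℝ := 1 + ∑ i, xt i * x i with hSdef
  set T : ℝ := ∑ i, α i * x i * x i with hTdef
  have hS : S ≠ 0 := by
    intro h0
    apply h1
    rw [hSdef] at h0
    linarith
  clear_value S T
  have hRHS : (∑ i, (α i)⁻¹ * x i * x i) - h * (∑ i, (α i)⁻¹ * x i * p i)
        + (h ^ 2 / 4) * (∑ i, (α i)⁻¹ * p i * p i)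
      = ∑ i, ((α i)⁻¹ * x i * x i - (α i)⁻¹ * x i * (h * p i)
          + (h * p i) * (h * p i) * (α i)⁻¹ / 4) := by
    rw [Finset.mul_sum, Finset.mul_sum, ← Finset.sum_sub_distrib,
      ← Finset.sum_add_distrib]
    exact Finset.sum_congr rfl fun i _ => by ring
  rw [hRHS]
  have hterm : ∀ i : Fin N, (α i)⁻¹ * x i * x i - (α i)⁻¹ * x i * (h * p i)
          + (h * p i) * (h * p i) * (α i)⁻¹ / 4
      = (α i)⁻¹ * (xt i + x i) * (xt i + x i) / S ^ 2
        + (4 / T ^ 2) * (α i * x i * x i) - (4 / (T * S)) * (x i * (xt i + x i)) := by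
    intro i
    rw [hp i]
    field_simp [hS, h2, hα i]
    ring
  rw [Finset.sum_congr rfl fun i _ => hterm i]
  have hxu : ∑ i, x i * (xt i + x i) = S := by
    have : ∑ i, x i * (xt i + x i) = ∑ i, (xt i * x i + x i * x i) :=
      Finset.sum_congr rfl fun i _ => by ring
    rw [this, Finset.sum_add_distrib, hs1, hSdef]
    ring
  rw [Finset.sum_sub_distrib, Finset.sum_add_distrib, ← Finset.mul_sum,
    ← Finset.mul_sum, hxu, ← hTdef, ← Finset.sum_div]
  field_simp
  ring
end

section
/- Let x, x̃ ∈ ℝ^N with ⟨x,x⟩ = ⟨x̃,x̃⟩ = 1, ⟨x̃,x⟩ ≠ −1, ⟨Ax,x⟩ ≠ 0, A = diag(α_1,…,α_N) with distinct entries, and p, p̃ given by h p_k = 2(x̃_k+x_k)/(1+⟨x̃,x⟩) − 4α_k x_k/⟨Ax,x⟩ + 2x_k, h p̃_k = −2(x̃_k+x_k)/(1+⟨x̃,x⟩) + 2x̃_k. Define X_{kj} = x_k p_j − x_j p_k, Y_{kj} = α_k x_k p_j − α_j x_j p_k, and similarly X̃, Ỹ with (x̃,p̃). Then for each k: x̃_k²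 − h x̃_k p̃_k + (h²/4) Σ_{j≠k} X̃_{kj} Ỹ_{kj}/(α_j − α_k) = x_k² − h x_k p_k + (h²/4) Σ_{j≠k} X_{kj} Y_{kj}/(α_j − α_k). -/
/-!
Put `q = h • p`, `u = 2 / (1 + ⟨x̃, x⟩)` and `v = 4 / ⟨Ax, x⟩`; then `q` and `q̃` are affine in
`x, x̃` and `h` disappears from `F_k`. For each `j` the difference `X̃_{kj} Ỹ_{kj} - X_{kj} Y_{kj}`
is divisible by `α_j - α_k`, and the quotient is a combination of `x_j², x̃_j², x̃_j x_j, α_j x_j²`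
that vanishes at `j = k`. Hence the sum over `j ≠ k` is a sum over all `j`, which the constraints
`⟨x,x⟩ = ⟨x̃,x̃⟩ = 1` reduce to the four numbers `1, 1, ⟨x̃,x⟩, ⟨Ax,x⟩`; what remains cancels
against the local terms `x_k² - x_k q_k`.
-/

open Finset

variable {K ι : Type*} [Field K]

/-- `X_{kj} Y_{kj}` in the notation of the paper. -/
def pairProduct (α x p : ι → K) (k j : ι) : K :=
  (x k * p j - x j * p k) * (α k * x k * p j - α j * x j * p k)

lemma pairProduct_smul (α x p : ι → K) (c : K) (k j : ι) :
    pairProduct α x (c • p) k j = c ^ 2 * pairProduct α x p k j := by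
  simp only [pairProduct, Pi.smul_apply, smul_eq_mul]
  ring

/-- `(X̃_{kj} Ỹ_{kj} - X_{kj} Y_{kj}) / (α_j - α_k)`, with `h p`, `h p̃` expressed through `u`, `v`. -/
def pairQuotient (α x xt : ι → K) (u v : K) (k j : ι) : K :=
  (v * α k * x k ^ 2 * (u + 2) - u ^ 2 * xt k * (x k + xt k) - 2 * u * x k * xt k) * x j ^ 2
    + (u ^ 2 * x k * (x k + xt k) - 2 * u * x k * xt k) * xt j ^ 2
    + (u ^ 2 * (x k + xt k) * (x k - xt k) + 2 * u * (x k ^ 2 + xt k ^ 2)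
        + u * v * α k * x k ^ 2) * (xt j * x j)
    - v * x k * (u * (x k + xt k) + 2 * x k) * (α j * x j ^ 2)

lemma pairQuotient_self (α x xt : ι → K) (u v : K) (k : ι) :
    pairQuotient α x xt u v k k = 0 := by
  unfold pairQuotient
  ring

section NeumannStep

variable {α x xt q qt : ι → K} {u v : K}

lemma pairProduct_sub_pairProduct
    (hq : ∀ i, q i = u * (xt i + x i) - v * α i * x i + 2 * x i)
    (hqt : ∀ i, qt i = -(u * (xt i + x i)) + 2 * xt i) (k j : ι) :
    pairProduct α xt qt k j - pairProduct α x q k j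
      = (α j - α k) * pairQuotient α x xt u v k j := by
  simp only [pairProduct, pairQuotient, hq, hqt]
  ring

variable [Fintype ι]

lemma sum_pairQuotient (hx : ∑ i, x i * x i = 1) (hxt : ∑ i, xt i * xt i = 1)
    (hu : u * (1 + ∑ i, xt i * x i) = 2) (hv : v * ∑ i, α i * x i * x i = 4) (k : ι) :
    ∑ j, pairQuotient α x xt u v k j
      = 4 * (xt k ^ 2 - x k ^ 2 - u * (x k + xt k) ^ 2 + v * α k * x k ^ 2) := by
  have moments : ∑ j, pairQuotient α x xt u v k j
      = (v * α k * x k ^ 2 * (u + 2) - u ^ 2 * xt k * (x k + xt k) - 2 * u * x k * xt k)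
          * ∑ i, x i * x i
        + (u ^ 2 * x k * (x k + xt k) - 2 * u * x k * xt k) * ∑ i, xt i * xt i
        + (u ^ 2 * (x k + xt k) * (x k - xt k) + 2 * u * (x k ^ 2 + xt k ^ 2)
            + u * v * α k * x k ^ 2) * ∑ i, xt i * x i
        - v * x k * (u * (x k + xt k) + 2 * x k) * ∑ i, α i * x i * x i := by
    simp only [mul_sum, ← sum_add_distrib, ← sum_sub_distrib]
    exact sum_congr rfl fun j _ => by unfold pairQuotient; ring
  rw [moments, hx, hxt]
  linear_combination (u * (x k + xt k) * (x k - xt k) + 2 * (x k ^ 2 + xt k ^ 2)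
      + v * α k * x k ^ 2) * hu - x k * (u * (x k + xt k) + 2 * x k) * hv

variable [DecidableEq ι]

def adlerIntegral (α : ι → K) (h : K) (x p : ι → K) (k : ι) : K :=
  x k ^ 2 - h * x k * p k + (h ^ 2 / 4) * ∑ j ∈ univ.erase k,
    (x k * p j - x j * p k) * (α k * x k * p j - α j * x j * p k) / (α j - α k)

lemma adlerIntegral_eq_pairProduct_smul (α : ι → K) (h : K) (x p : ι → K) (k : ι) :
    adlerIntegral α h x p k = x k ^ 2 - x k * (h * p k)
      + (∑ j ∈ univ.erase k, pairProduct α x (h • p) k j / (α j - α k)) / 4 := by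
  simp only [adlerIntegral, pairProduct_smul, mul_div_assoc, ← mul_sum]
  simp only [pairProduct, mul_div_assoc]
  ring

theorem adlerIntegral_neumannStep [CharZero K] {h : K} {p pt : ι → K} {k : ι}
    (hα : ∀ j, j ≠ k → α j ≠ α k)
    (hx : ∑ i, x i * x i = 1) (hxt : ∑ i, xt i * xt i = 1)
    (hu : u * (1 + ∑ i, xt i * x i) = 2) (hv : v * ∑ i, α i * x i * x i = 4)
    (hp : ∀ i, h * p i = u * (xt i + x i) - v * α i * x i + 2 * x i)
    (hpt : ∀ i, h * pt i = -(u * (xt i + x i)) + 2 * xt i) :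
    adlerIntegral α h xt pt k = adlerIntegral α h x p k := by
  have hdiff : ∑ j ∈ univ.erase k, pairProduct α xt (h • pt) k j / (α j - α k)
      - ∑ j ∈ univ.erase k, pairProduct α x (h • p) k j / (α j - α k)
      = ∑ j, pairQuotient α x xt u v k j := by
    rw [← sum_sub_distrib, ← sum_erase _ (pairQuotient_self α x xt u v k)]
    refine sum_congr rfl fun j hj => ?_
    rw [← sub_div, pairProduct_sub_pairProduct (q := h • p) (qt := h • pt) hp hpt,
      mul_div_cancel_left₀ _ (sub_ne_zero.mpr (hα j (ne_of_mem_erase hj)))]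
  rw [adlerIntegral_eq_pairProduct_smul, adlerIntegral_eq_pairProduct_smul]
  linear_combination hdiff / 4
    + sum_pairQuotient hx hxt hu hv k / 4 + x k * hp k - xt k * hpt k

end NeumannStep

theorem adler_main_integrals_general (N : ℕ) (α : Fin N → ℝ)
    (hα : ∀ j k : Fin N, j ≠ k → α j ≠ α k)
    (h : ℝ) (x xt p pt : Fin N → ℝ)
    (hs1 : ∑ i, x i * x i = 1) (hs2 : ∑ i, xt i * xt i = 1)
    (h1 : (∑ i, xt i * x i) ≠ -1) (h2 : (∑ i, α i * x i * x i) ≠ 0)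
    (hp : ∀ k, h * p k = 2 * (xt k + x k) / (1 + ∑ i, xt i * x i)
        - 4 * α k * x k / (∑ i, α i * x i * x i) + 2 * x k)
    (hpt : ∀ k, h * pt k = -(2 * (xt k + x k) / (1 + ∑ i, xt i * x i)) + 2 * xt k) :
    ∀ k : Fin N,
      xt k ^ 2 - h * xt k * pt k + (h ^ 2 / 4) * ∑ j ∈ Finset.univ.erase k,
          (xt k * pt j - xt j * pt k) * (α k * xt k * pt j - α j * xt j * pt k)
            / (α j - α k)
      = x k ^ 2 - h * x k * p k + (h ^ 2 / 4) * ∑ j ∈ Finset.univ.erase k,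
          (x k * p j - x j * p k) * (α k * x k * p j - α j * x j * p k)
            / (α j - α k) := by
  intro k
  have hs : 1 + ∑ i, xt i * x i ≠ 0 := fun h0 => h1 (by linear_combination h0)
  exact adlerIntegral_neumannStep (u := 2 / (1 + ∑ i, xt i * x i))
    (v := 4 / ∑ i, α i * x i * x i) (fun j hj => hα j k hj) hs1 hs2
    (div_mul_cancel₀ _ hs) (div_mul_cancel₀ _ h2) (fun i => by rw [hp]; ring)
    (fun i => by rw [hpt]; ring)

theorem adler_main_integrals (N : ℕ) (α : Fin N → ℝ)
    (hα : ∀ j k : Fin N, j ≠ k → α j ≠ α k)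
    (h : ℝ) (hh : h ≠ 0) (x xt p pt : Fin N → ℝ)
    (hs1 : ∑ i, x i * x i = 1) (hs2 : ∑ i, xt i * xt i = 1)
    (h1 : (∑ i, xt i * x i) ≠ -1) (h2 : (∑ i, α i * x i * x i) ≠ 0)
    (hp : ∀ k, h * p k = 2 * (xt k + x k) / (1 + ∑ i, xt i * x i)
        - 4 * α k * x k / (∑ i, α i * x i * x i) + 2 * x k)
    (hpt : ∀ k, h * pt k = -(2 * (xt k + x k) / (1 + ∑ i, xt i * x i)) + 2 * xt k) :
    ∀ k : Fin N,
      xt k ^ 2 - h * xt k * pt k + (h ^ 2 / 4) * ∑ j ∈ Finset.univ.erase k,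
          (xt k * pt j - xt j * pt k) * (α k * xt k * pt j - α j * xt j * pt k)
            / (α j - α k)
      = x k ^ 2 - h * x k * p k + (h ^ 2 / 4) * ∑ j ∈ Finset.univ.erase k,
          (x k * p j - x j * p k) * (α k * x k * p j - α j * x j * p k)
            / (α j - α k) :=
  adler_main_integrals_general N α hα h x xt p pt hs1 hs2 h1 h2 hp hpt
end

section
/- Let x, x̃ ∈ ℝ^N with ⟨x,x⟩ = ⟨x̃,x̃⟩ = 1, ⟨x̃,x⟩ ≠ −1, ⟨Ax,x⟩ ≠ 0, A = diag(α_1,…,α_N), and p, p̃ the momenta given by h p_k = 2(x̃_k+x_k)/(1+⟨x̃,x⟩) − 4α_k x_k/⟨Ax,x⟩ + 2x_k, h p̃_k = −2(x̃_k+x_k)/(1+⟨x̃,x⟩) + 2x̃_k. Then for any k ≠ j with α_k ≠ α_j: (h/2)·((x̃_k p̃_j − x̃_j p̃_k) − (x_k p_j − x_j p_k))/(α_j − α_k) = 2 x_k x_j/⟨Ax,x⟩. -/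
open Finset

theorem adler_X_difference_lemma (N : ℕ) (α : Fin N → ℝ) (h : ℝ) (hh : h ≠ 0)
    (x xt p pt : Fin N → ℝ)
    (hs1 : ∑ i, x i * x i = 1) (hs2 : ∑ i, xt i * xt i = 1)
    (h1 : (∑ i, xt i * x i) ≠ -1) (h2 : (∑ i, α i * x i * x i) ≠ 0)
    (hp : ∀ k, h * p k = 2 * (xt k + x k) / (1 + ∑ i, xt i * x i)
        - 4 * α k * x k / (∑ i, α i * x i * x i) + 2 * x k)
    (hpt : ∀ k, h * pt k = -(2 * (xt k + x k) / (1 + ∑ i, xt i * x i)) + 2 * xt k) :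
    ∀ k j : Fin N, k ≠ j → α k ≠ α j →
      (h / 2) * ((xt k * pt j - xt j * pt k) - (x k * p j - x j * p k)) / (α j - α k)
        = 2 * x k * x j / (∑ i, α i * x i * x i) := by
  intro k j hkj haj
  have hS : (1 : ℝ) + ∑ i, xt i * x i ≠ 0 := fun hc => h1 (by linarith)
  have hd : α j - α k ≠ 0 := sub_ne_zero.mpr (Ne.symm haj)
  have Pj : p j = (2 * (xt j + x j) / (1 + ∑ i, xt i * x i)
      - 4 * α j * x j / (∑ i, α i * x i * x i) + 2 * x j) / h := by
    rw [eq_div_iff hh, mul_comm]; exact hp j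
  have Pk : p k = (2 * (xt k + x k) / (1 + ∑ i, xt i * x i)
      - 4 * α k * x k / (∑ i, α i * x i * x i) + 2 * x k) / h := by
    rw [eq_div_iff hh, mul_comm]; exact hp k
  have Qj : pt j = (-(2 * (xt j + x j) / (1 + ∑ i, xt i * x i)) + 2 * xt j) / h := by
    rw [eq_div_iff hh, mul_comm]; exact hpt j
  have Qk : pt k = (-(2 * (xt k + x k) / (1 + ∑ i, xt i * x i)) + 2 * xt k) / h := by
    rw [eq_div_iff hh, mul_comm]; exact hpt k
  rw [Pj, Pk, Qj, Qk]
  field_simp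
  ring
end

section
/- Let x, x̃ ∈ ℝ^N with ⟨x,x⟩ = ⟨x̃,x̃⟩ = 1, ⟨x̃,x⟩ ≠ −1, ⟨Ax,x⟩ ≠ 0, A = diag(α_1,…,α_N), and p given by h p_k = 2(x̃_k+x_k)/(1+⟨x̃,x⟩) − 4α_k x_k/⟨Ax,x⟩ + 2x_k. Then for any k: (2/⟨Ax,x⟩)·Σ_{j=1}^N x_k x_j·[(α_k x_k x̃_j − α_j x̃_k x_j + (α_k−α_j)x_k x_j)/(1+⟨x̃,x⟩) + (α_k−α_j)x_k x_j] = −h x_k p_k. -/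
open Finset

theorem adler_computational_identity_2 (N : ℕ) (α : Fin N → ℝ) (h : ℝ) (hh : h ≠ 0)
    (x xt p : Fin N → ℝ)
    (hs1 : ∑ i, x i * x i = 1) (hs2 : ∑ i, xt i * xt i = 1)
    (h1 : (∑ i, xt i * x i) ≠ -1) (h2 : (∑ i, α i * x i * x i) ≠ 0)
    (hp : ∀ k, h * p k = 2 * (xt k + x k) / (1 + ∑ i, xt i * x i)
        - 4 * α k * x k / (∑ i, α i * x i * x i) + 2 * x k) :
    ∀ k : Fin N,
      (2 / (∑ i, α i * x i * x i)) * ∑ j, x k * x j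
          * ((α k * x k * xt j - α j * xt k * x j + (α k - α j) * x k * x j)
              / (1 + ∑ i, xt i * x i)
            + (α k - α j) * x k * x j)
        = -(h * x k * p k) := by
  intro k
  set T : ℝ := ∑ i, xt i * x i with hT
  set A : ℝ := ∑ i, α i * x i * x i with hA
  have hT0 : (1 : ℝ) + T ≠ 0 := by
    intro hc; apply h1; linarith
  have expand : ∀ j, x k * x j
      * ((α k * x k * xt j - α j * xt k * x j + (α k - α j) * x k * x j)
          / (1 + T) + (α k - α j) * x k * x j)
      = (x k * (α k * x k) / (1 + T)) * (xt j * x j)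
        + (x k * (α k * x k) / (1 + T) + x k * (α k * x k)) * (x j * x j)
        - (x k * xt k / (1 + T) + x k * x k / (1 + T) + x k * x k)
            * (α j * x j * x j) := by
    intro j
    field_simp
    ring
  have hsum : (∑ j, x k * x j
      * ((α k * x k * xt j - α j * xt k * x j + (α k - α j) * x k * x j)
          / (1 + T) + (α k - α j) * x k * x j))
      = (x k * (α k * x k) / (1 + T)) * T
        + (x k * (α k * x k) / (1 + T) + x k * (α k * x k)) * 1
        - (x k * xt k / (1 + T) + x k * x k / (1 + T) + x k * x k) * A := by
    rw [Finset.sum_congr rfl fun j _ => expand j]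
    rw [Finset.sum_sub_distrib, Finset.sum_add_distrib, ← Finset.mul_sum,
      ← Finset.mul_sum, ← Finset.mul_sum, hs1]
  rw [hsum]
  have hpk := hp k
  have : -(h * x k * p k) = -(x k * (h * p k)) := by ring
  rw [this, hpk]
  field_simp
  ring
end

section
/- Let A = diag(α_1,…,α_N) with α_k ≠ 0 pairwise distinct, h ≠ 0, and for x, p ∈ ℝ^N define F_k(x,p) = x_k² − h x_k p_k + (h²/4) Σ_{j≠k} (x_k p_j − x_j p_k)(α_k x_k p_j − α_j x_j p_k)/(α_j − α_k), 2I₁ = ⟨Ax,x⟩ − h⟨Ax,p⟩ − (h²/4)⟨p,p⟩⟨Ax,x⟩ and I₂ = ⟨A⁻¹x,x⟩ − h⟨A⁻¹x,p⟩ + (h²/4)⟨A⁻¹p,p⟩. Assuming ⟨x,x⟩ = 1 and ⟨p,x⟩ = 0, one has 2I₁ = Σ_{k=1}^N α_k F_k and I₂ = Σ_{k=1}^N α_k⁻¹ F_k. -/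
open Finset

private lemma adler_dsum {N : ℕ} (f g : Fin N → Fin N → ℝ)
    (hfg : ∀ k j : Fin N, j ≠ k → f k j + f j k = g k j)
    (hgd : ∀ k, g k k = 0) :
    2 * ∑ k, ∑ j ∈ Finset.univ.erase k, f k j = ∑ k, ∑ j, g k j := by
  have e : ∀ (F : Fin N → Fin N → ℝ), ∑ k, ∑ j ∈ Finset.univ.erase k, F k j
      = (∑ k, ∑ j, F k j) - ∑ k, F k k := by
    intro F
    rw [← Finset.sum_sub_distrib]
    refine Finset.sum_congr rfl fun k _ => ?_
    rw [Finset.sum_erase_eq_sub (Finset.mem_univ k)]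
  have swap : ∑ k, ∑ j ∈ Finset.univ.erase k, f k j
      = ∑ k, ∑ j ∈ Finset.univ.erase k, f j k := by
    rw [e, e, Finset.sum_comm]
  calc 2 * ∑ k, ∑ j ∈ Finset.univ.erase k, f k j
      = (∑ k, ∑ j ∈ Finset.univ.erase k, f k j)
        + ∑ k, ∑ j ∈ Finset.univ.erase k, f j k := by rw [← swap]; ring
    _ = ∑ k, ∑ j ∈ Finset.univ.erase k, g k j := by
        rw [← Finset.sum_add_distrib]
        refine Finset.sum_congr rfl fun k _ => ?_
        rw [← Finset.sum_add_distrib]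
        exact Finset.sum_congr rfl fun j hj => hfg k j (Finset.ne_of_mem_erase hj)
    _ = ∑ k, ∑ j, g k j := by
        refine Finset.sum_congr rfl fun k _ => ?_
        rw [Finset.sum_erase_eq_sub (Finset.mem_univ k), hgd k, sub_zero]

theorem adler_I1_I2_as_combinations (N : ℕ) (α : Fin N → ℝ)
    (hα0 : ∀ k, α k ≠ 0) (hα : ∀ j k : Fin N, j ≠ k → α j ≠ α k)
    (h : ℝ) (hh : h ≠ 0) (x p : Fin N → ℝ)
    (hx : ∑ i, x i * x i = 1) (hpx : ∑ i, p i * x i = 0) :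
    ((∑ i, α i * x i * x i) - h * (∑ i, α i * x i * p i)
        - (h ^ 2 / 4) * (∑ i, p i * p i) * (∑ i, α i * x i * x i)
      = ∑ k, α k * (x k ^ 2 - h * x k * p k + (h ^ 2 / 4) * ∑ j ∈ Finset.univ.erase k,
          (x k * p j - x j * p k) * (α k * x k * p j - α j * x j * p k) / (α j - α k)))
    ∧
    ((∑ i, (α i)⁻¹ * x i * x i) - h * (∑ i, (α i)⁻¹ * x i * p i)
        + (h ^ 2 / 4) * (∑ i, (α i)⁻¹ * p i * p i)
      = ∑ k, (α k)⁻¹ * (x k ^ 2 - h * x k * p k + (h ^ 2 / 4) * ∑ j ∈ Finset.univ.erase k,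
          (x k * p j - x j * p k) * (α k * x k * p j - α j * x j * p k) / (α j - α k))) := by
  set T : Fin N → Fin N → ℝ := fun k j =>
    (x k * p j - x j * p k) * (α k * x k * p j - α j * x j * p k) / (α j - α k) with hT
  have hsub : ∀ j k : Fin N, j ≠ k → α j - α k ≠ 0 := fun j k hjk =>
    sub_ne_zero.mpr (hα j k hjk)
  -- part 1 double sum
  have hD1 : 2 * (∑ k, ∑ j ∈ Finset.univ.erase k, α k * T k j)
      = ∑ k, ∑ j, (-(α k * x k * x k) * (p j * p j) + (x k * p k) * (α j * x j * p j)
          + (α k * x k * p k) * (p j * x j) - (p k * p k) * (α j * x j * x j)) := by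
    refine adler_dsum _ _ (fun k j hjk => ?_) (fun k => by ring)
    have h1 := hsub j k hjk
    have h2 := hsub k j (Ne.symm hjk)
    simp only [hT]
    field_simp
    ring
  have hE1 : ∑ k, ∑ j, (-(α k * x k * x k) * (p j * p j) + (x k * p k) * (α j * x j * p j)
          + (α k * x k * p k) * (p j * x j) - (p k * p k) * (α j * x j * x j))
      = -(∑ i, α i * x i * x i) * (∑ i, p i * p i)
        + (∑ i, x i * p i) * (∑ i, α i * x i * p i)
        + (∑ i, α i * x i * p i) * (∑ i, p i * x i)
        - (∑ i, p i * p i) * (∑ i, α i * x i * x i) := by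
    have inner : ∀ k : Fin N, ∑ j, (-(α k * x k * x k) * (p j * p j) + (x k * p k) * (α j * x j * p j)
          + (α k * x k * p k) * (p j * x j) - (p k * p k) * (α j * x j * x j))
        = -(α k * x k * x k) * (∑ i, p i * p i) + (x k * p k) * (∑ i, α i * x i * p i)
          + (α k * x k * p k) * (∑ i, p i * x i) - (p k * p k) * (∑ i, α i * x i * x i) := by
      intro k
      simp only [Finset.mul_sum]
      rw [← Finset.sum_add_distrib, ← Finset.sum_add_distrib, ← Finset.sum_sub_distrib]
    rw [Finset.sum_congr rfl fun k _ => inner k]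
    simp only [Finset.sum_add_distrib, Finset.sum_sub_distrib, ← Finset.sum_mul, neg_mul,
      Finset.sum_neg_distrib]
  -- part 2 double sum
  have hD2 : 2 * (∑ k, ∑ j ∈ Finset.univ.erase k, (α k)⁻¹ * T k j)
      = ∑ k, ∑ j, ((α j)⁻¹ * (p j * p j) * (x k * x k) - (α k)⁻¹ * (x k * p k) * (x j * p j)
          - (x k * p k) * ((α j)⁻¹ * x j * p j) + (α k)⁻¹ * (p k * p k) * (x j * x j)) := by
    refine adler_dsum _ _ (fun k j hjk => ?_) (fun k => by ring)
    have h1 := hsub j k hjk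
    have h2 := hsub k j (Ne.symm hjk)
    have h3 := hα0 j
    have h4 := hα0 k
    simp only [hT]
    field_simp
    ring
  have hE2 : ∑ k, ∑ j, ((α j)⁻¹ * (p j * p j) * (x k * x k) - (α k)⁻¹ * (x k * p k) * (x j * p j)
          - (x k * p k) * ((α j)⁻¹ * x j * p j) + (α k)⁻¹ * (p k * p k) * (x j * x j))
      = (∑ i, x i * x i) * (∑ i, (α i)⁻¹ * p i * p i)
        - (∑ i, (α i)⁻¹ * x i * p i) * (∑ i, x i * p i)
        - (∑ i, x i * p i) * (∑ i, (α i)⁻¹ * x i * p i)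
        + (∑ i, (α i)⁻¹ * p i * p i) * (∑ i, x i * x i) := by
    have inner : ∀ k : Fin N, ∑ j, ((α j)⁻¹ * (p j * p j) * (x k * x k) - (α k)⁻¹ * (x k * p k) * (x j * p j)
          - (x k * p k) * ((α j)⁻¹ * x j * p j) + (α k)⁻¹ * (p k * p k) * (x j * x j))
        = (x k * x k) * (∑ i, (α i)⁻¹ * p i * p i) - ((α k)⁻¹ * x k * p k) * (∑ i, x i * p i)
          - (x k * p k) * (∑ i, (α i)⁻¹ * x i * p i) + ((α k)⁻¹ * p k * p k) * (∑ i, x i * x i) := by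
      intro k
      simp only [Finset.mul_sum]
      rw [← Finset.sum_sub_distrib, ← Finset.sum_sub_distrib, ← Finset.sum_add_distrib]
      exact Finset.sum_congr rfl fun j _ => by ring
    rw [Finset.sum_congr rfl fun k _ => inner k]
    simp only [Finset.sum_add_distrib, Finset.sum_sub_distrib, ← Finset.sum_mul]
  -- rewrite RHS sums
  have hxp : ∑ i, x i * p i = 0 := by
    rw [← hpx]; exact Finset.sum_congr rfl fun i _ => by ring
  constructor
  · have hR : ∑ k, α k * (x k ^ 2 - h * x k * p k + (h ^ 2 / 4) * ∑ j ∈ Finset.univ.erase k, T k j)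
        = (∑ k, α k * x k * x k) - h * (∑ k, α k * x k * p k)
          + (h ^ 2 / 4) * ∑ k, ∑ j ∈ Finset.univ.erase k, α k * T k j := by
      rw [Finset.sum_congr rfl (fun k _ => show
        α k * (x k ^ 2 - h * x k * p k + (h ^ 2 / 4) * ∑ j ∈ Finset.univ.erase k, T k j)
          = α k * x k * x k - h * (α k * x k * p k)
            + (h ^ 2 / 4) * ∑ j ∈ Finset.univ.erase k, α k * T k j by
        rw [← Finset.mul_sum]; ring)]
      simp only [Finset.sum_add_distrib, Finset.sum_sub_distrib, ← Finset.mul_sum]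
    rw [hR]
    rw [hE1] at hD1
    rw [hpx, hxp] at hD1
    linear_combination (-(h ^ 2) / 8) * hD1
  · have hR : ∑ k, (α k)⁻¹ * (x k ^ 2 - h * x k * p k + (h ^ 2 / 4) * ∑ j ∈ Finset.univ.erase k, T k j)
        = (∑ k, (α k)⁻¹ * x k * x k) - h * (∑ k, (α k)⁻¹ * x k * p k)
          + (h ^ 2 / 4) * ∑ k, ∑ j ∈ Finset.univ.erase k, (α k)⁻¹ * T k j := by
      rw [Finset.sum_congr rfl (fun k _ => show
        (α k)⁻¹ * (x k ^ 2 - h * x k * p k + (h ^ 2 / 4) * ∑ j ∈ Finset.univ.erase k, T k j)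
          = (α k)⁻¹ * x k * x k - h * ((α k)⁻¹ * x k * p k)
            + (h ^ 2 / 4) * ∑ j ∈ Finset.univ.erase k, (α k)⁻¹ * T k j by
        rw [← Finset.mul_sum]; ring)]
      simp only [Finset.sum_add_distrib, Finset.sum_sub_distrib, ← Finset.mul_sum]
    rw [hR]
    rw [hE2] at hD2
    rw [hxp, hx] at hD2
    linear_combination (-(h ^ 2) / 8) * hD2
end

section
/- Let x, x̃ ∈ ℝ^N with ⟨x,x⟩ = ⟨x̃,x̃⟩ = 1, ⟨x̃,x⟩ ≠ −1, ⟨Ax,x⟩ ≠ 0, A = diag(α_1,…,α_N), and p defined by h p_k = 2(x̃_k+x_k)/(1+⟨x̃,x⟩) − 4α_k x_k/⟨Ax,x⟩ + 2x_k. Then 2/(1+⟨x̃,x⟩) = ‖2Ax/⟨Ax,x⟩ − x + hp/2‖², and consequently x̃ is uniquely determined by (x,p): x̃_k = (1+⟨x̃,x⟩)·(2α_k x_k/⟨Ax,x⟩ − x_k + h p_k/2) − x_k. -/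
/-!
The defining relation for `p` says exactly that the vector `2 A x / ⟨A x, x⟩ - x + h p / 2` equals
`(x̃ + x) / (1 + ⟨x̃, x⟩)`. For unit vectors `‖x̃ + x‖² = 2 (1 + ⟨x̃, x⟩)`, which gives the norm
identity, and multiplying back by `1 + ⟨x̃, x⟩` recovers `x̃`.
-/

open Finset

lemma sum_add_sq_of_sum_mul_self_eq_one {ι : Type*} [Fintype ι] {u v : ι → ℝ}
    (hu : ∑ i, u i * u i = 1) (hv : ∑ i, v i * v i = 1) :
    ∑ i, (u i + v i) ^ 2 = 2 * (1 + ∑ i, u i * v i) := by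
  have hexpand : ∀ i, (u i + v i) ^ 2 = u i * u i + 2 * (u i * v i) + v i * v i :=
    fun i => by ring
  simp_rw [hexpand, sum_add_distrib, ← mul_sum, hu, hv]
  ring

theorem adler_explicit_map_general (N : ℕ) (α : Fin N → ℝ) (h : ℝ)
    (x xt p : Fin N → ℝ)
    (hs1 : ∑ i, x i * x i = 1) (hs2 : ∑ i, xt i * xt i = 1)
    (h1 : (∑ i, xt i * x i) ≠ -1)
    (hp : ∀ k, h * p k = 2 * (xt k + x k) / (1 + ∑ i, xt i * x i)
        - 4 * α k * x k / (∑ i, α i * x i * x i) + 2 * x k) :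
    (2 / (1 + ∑ i, xt i * x i)
      = ∑ k, (2 * α k * x k / (∑ i, α i * x i * x i) - x k + h * p k / 2) ^ 2)
    ∧
    (∀ k, xt k = (1 + ∑ i, xt i * x i)
        * (2 * α k * x k / (∑ i, α i * x i * x i) - x k + h * p k / 2) - x k) := by
  have hS : 1 + ∑ i, xt i * x i ≠ 0 := fun h0 => h1 (by linarith)
  have hmidpoint : ∀ k, 2 * α k * x k / (∑ i, α i * x i * x i) - x k + h * p k / 2
      = (xt k + x k) / (1 + ∑ i, xt i * x i) := fun k => by rw [hp k]; ring
  simp_rw [hmidpoint]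
  refine ⟨?_, fun k => by field_simp; ring⟩
  simp_rw [div_pow]
  rw [← sum_div, sum_add_sq_of_sum_mul_self_eq_one hs2 hs1]
  field_simp

theorem adler_explicit_map (N : ℕ) (α : Fin N → ℝ) (h : ℝ) (hh : h ≠ 0)
    (x xt p : Fin N → ℝ)
    (hs1 : ∑ i, x i * x i = 1) (hs2 : ∑ i, xt i * xt i = 1)
    (h1 : (∑ i, xt i * x i) ≠ -1) (h2 : (∑ i, α i * x i * x i) ≠ 0)
    (hp : ∀ k, h * p k = 2 * (xt k + x k) / (1 + ∑ i, xt i * x i)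
        - 4 * α k * x k / (∑ i, α i * x i * x i) + 2 * x k) :
    (2 / (1 + ∑ i, xt i * x i)
      = ∑ k, (2 * α k * x k / (∑ i, α i * x i * x i) - x k + h * p k / 2) ^ 2)
    ∧
    (∀ k, xt k = (1 + ∑ i, xt i * x i)
        * (2 * α k * x k / (∑ i, α i * x i * x i) - x k + h * p k / 2) - x k) :=
  adler_explicit_map_general N α h x xt p hs1 hs2 h1 hp
end
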